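/- arXiv:1701.02912 — 4 statements merged into one kernel-verified Lean document; each statement's English description precedes it below -/
import Mathlib

section
/- Let R = 4a^3c - a^2b^2 - 18abc + 4b^3 + 27c^2, regarded as a polynomial in a with coefficients in ℂ[b,c]. Then Res(R, ∂R/∂a, a) = -64 c (b^3 - 27c^2)^3. -/
open Polynomial Finset

noncomputable def sylvester {R : Type*} [CommRing R] (m n : ℕ) (f g : Polynomial R) :
    Matrix (Fin (m + n)) (Fin (m + n)) R := fun i j =>
  if (i : ℕ) < n then
    (if (i : ℕ) ≤ (j : ℕ) ∧ (j : ℕ) ≤ (i : ℕ) + m then f.coeff (m - ((j : ℕ) - (i : ℕ))) else 0)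
  else
    (if (i : ℕ) - n ≤ (j : ℕ) ∧ (j : ℕ) ≤ (i : ℕ) - n + n then
      g.coeff (n - ((j : ℕ) - ((i : ℕ) - n))) else 0)

noncomputable def res {R : Type*} [CommRing R] (m n : ℕ) (f g : Polynomial R) : R :=
  (sylvester m n f g).det

set_option maxHeartbeats 2000000 in
theorem repeated_discriminant_cubic_a (b c : ℂ) :
    res 3 2 (C (4 * c) * X ^ 3 - C (b ^ 2) * X ^ 2 - C (18 * b * c) * X
        + C (4 * b ^ 3 + 27 * c ^ 2))
      (derivative (C (4 * c) * X ^ 3 - C (b ^ 2) * X ^ 2 - C (18 * b * c) * X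
        + C (4 * b ^ 3 + 27 * c ^ 2))) =
    -64 * c * (b ^ 3 - 27 * c ^ 2) ^ 3 := by
  set f : ℂ[X] := C (4 * c) * X ^ 3 - C (b ^ 2) * X ^ 2 - C (18 * b * c) * X
        + C (4 * b ^ 3 + 27 * c ^ 2) with hf
  have c0 : f.coeff 0 = 4 * b ^ 3 + 27 * c ^ 2 := by
    simp only [hf, coeff_add, coeff_sub, coeff_C_mul, coeff_X_pow, coeff_X, coeff_C]; norm_num
  have c1 : f.coeff 1 = -(18 * b * c) := by
    simp only [hf, coeff_add, coeff_sub, coeff_C_mul, coeff_X_pow, coeff_X, coeff_C]; norm_num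
  have c2 : f.coeff 2 = -b ^ 2 := by
    simp only [hf, coeff_add, coeff_sub, coeff_C_mul, coeff_X_pow, coeff_X, coeff_C]; norm_num
  have c3 : f.coeff 3 = 4 * c := by
    simp only [hf, coeff_add, coeff_sub, coeff_C_mul, coeff_X_pow, coeff_X, coeff_C]; norm_num
  have c4 : f.coeff 4 = 0 := by
    simp only [hf, coeff_add, coeff_sub, coeff_C_mul, coeff_X_pow, coeff_X, coeff_C]; norm_num
  have d0 : (derivative f).coeff 0 = -(18 * b * c) := by
    rw [coeff_derivative, c1]; norm_num
  have d1 : (derivative f).coeff 1 = -(2 * b ^ 2) := by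
    rw [coeff_derivative, c2]; push_cast; ring
  have d2 : (derivative f).coeff 2 = 12 * c := by
    rw [coeff_derivative, c3]; push_cast; ring
  rw [res]
  have h : sylvester 3 2 f (derivative f) =
      !![4*c, -b^2, -(18*b*c), 4*b^3+27*c^2, 0;
         0, 4*c, -b^2, -(18*b*c), 4*b^3+27*c^2;
         12*c, -(2*b^2), -(18*b*c), 0, 0;
         0, 12*c, -(2*b^2), -(18*b*c), 0;
         0, 0, 12*c, -(2*b^2), -(18*b*c)] := by
    ext i j
    fin_cases i <;> fin_cases j <;>
      norm_num [_root_.sylvester, c0, c1, c2, c3, c4, d0, d1, d2, Matrix.vecHead, Matrix.vecTail]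
  rw [h]
  simp [Matrix.det_succ_row_zero, Fin.sum_univ_succ, Fin.succAbove, Fin.castSucc, Fin.castAdd, Fin.castLE]
  ring
end

section
/- Let R = 4a^3c - a^2b^2 - 18abc + 4b^3 + 27c^2, regarded as a polynomial in b. Then Res(R, ∂R/∂b, b) = -64 c (a^3 - 27c)^3. -/
open Polynomial Finset

lemma sylv32 {R : Type*} [CommRing R] (f g : Polynomial R) :
    sylvester 3 2 f g = !![f.coeff 3, f.coeff 2, f.coeff 1, f.coeff 0, 0;
      0, f.coeff 3, f.coeff 2, f.coeff 1, f.coeff 0;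
      g.coeff 2, g.coeff 1, g.coeff 0, 0, 0;
      0, g.coeff 2, g.coeff 1, g.coeff 0, 0;
      0, 0, g.coeff 2, g.coeff 1, g.coeff 0] := by
  ext i j
  fin_cases i <;> fin_cases j <;> simp [_root_.sylvester, Matrix.vecHead, Matrix.vecTail]

set_option maxHeartbeats 2000000 in
lemma detS {R : Type*} [CommRing R] (p q r s u v w : R) :
    Matrix.det !![p, q, r, s, 0; 0, p, q, r, s; u, v, w, 0, 0;
      0, u, v, w, 0; 0, 0, u, v, w] =
    p^2*w^3 - p*q*v*w^2 - 2*p*r*u*w^2 + p*r*v^2*w + 3*p*s*u*v*w - p*s*v^3 + q^2*u*w^2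
      - q*r*u*v*w - 2*q*s*u^2*w + q*s*u*v^2 + r^2*u^2*w - r*s*u^2*v + s^2*u^3 := by
  simp only [Matrix.det_succ_row_zero, Fin.sum_univ_succ, Fin.sum_univ_zero,
    Matrix.submatrix_apply, Matrix.submatrix_submatrix, Function.comp]
  norm_num [Fin.succAbove, Fin.lt_def, Matrix.cons_val', Matrix.cons_val_zero,
    Matrix.cons_val_one, Matrix.head_cons, Matrix.vecHead, Matrix.vecTail, Fin.castSucc,
    Fin.castAdd, Fin.castLE, Matrix.cons_val_two, Matrix.cons_val_three, Matrix.cons_val_four]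
  ring

set_option maxHeartbeats 4000000 in
theorem repeated_discriminant_cubic_b (a c : ℂ) :
    res 3 2 (C 4 * X ^ 3 - C (a ^ 2) * X ^ 2 - C (18 * a * c) * X
        + C (4 * a ^ 3 * c + 27 * c ^ 2))
      (derivative (C 4 * X ^ 3 - C (a ^ 2) * X ^ 2 - C (18 * a * c) * X
        + C (4 * a ^ 3 * c + 27 * c ^ 2))) =
    -64 * c * (a ^ 3 - 27 * c) ^ 3 := by
  rw [res, sylv32]
  simp only [derivative_add, derivative_sub, derivative_mul, derivative_C, derivative_X,
    derivative_X_pow, zero_mul, mul_one, zero_add, mul_zero, add_zero, derivative_one]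
  simp only [coeff_add, coeff_sub, coeff_C_mul, coeff_X_pow, coeff_X, coeff_C, coeff_mul_C,
    coeff_natCast_ite]
  norm_num
  rw [detS]
  ring
end

section
/- Let R be the discriminant of the quartic x^4+ax^3+bx^2+cx+d (the explicit degree-6 quasi-homogeneous polynomial in a,b,c,d with R = -27a^4d^2 + 18a^3bcd - 4a^3c^3 + a^2b^2c^2 + 144a^2bd^2 - 4a^2b^3d - 6a^2c^2d - 80ab^2cd + 18abc^3 - 192acd^2 + 16b^4d - 4b^3c^2 - 128b^2d^2 + 144bc^2d - 27c^4 + 256d^3). Then Res(R, ∂R/∂d, d) = 4096 (a^3 - 4ab + 8c)^2 (27a^3c - 9a^2b^2 - 108abc + 32b^3 + 108c^2)^3. -/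
open Polynomial Finset

lemma det5 (p0 p1 p2 p3 q0 q1 q2 : ℂ) :
    Matrix.det !![p3,p2,p1,p0,0; 0,p3,p2,p1,p0; q2,q1,q0,0,0; 0,q2,q1,q0,0; 0,0,q2,q1,q0] =
    p3^2*q0^3 - p2*p3*q0^2*q1 + p2^2*q0^2*q2 + p1*p3*q0*q1^2 - 2*p1*p3*q0^2*q2
      - p1*p2*q0*q1*q2 + p1^2*q0*q2^2 - p0*p3*q1^3 + 3*p0*p3*q0*q1*q2 + p0*p2*q1^2*q2
      - 2*p0*p2*q0*q2^2 - p0*p1*q1*q2^2 + p0^2*q2^3 := by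
  simp [Matrix.det_succ_row_zero, Fin.sum_univ_succ, Fin.succAbove]
  ring

lemma syl_eq (f g : Polynomial ℂ) :
    sylvester 3 2 f g = !![f.coeff 3, f.coeff 2, f.coeff 1, f.coeff 0, 0;
      0, f.coeff 3, f.coeff 2, f.coeff 1, f.coeff 0;
      g.coeff 2, g.coeff 1, g.coeff 0, 0, 0;
      0, g.coeff 2, g.coeff 1, g.coeff 0, 0;
      0, 0, g.coeff 2, g.coeff 1, g.coeff 0] := by
  ext i j
  fin_cases i <;> fin_cases j <;> simp [_root_.sylvester, Matrix.vecHead, Matrix.vecTail]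

theorem repeated_discriminant_quartic_d (a b c : ℂ) :
    res 3 2 (C (-27 * a ^ 4) * X ^ 2 + C (18 * a ^ 3 * b * c) * X + C (-4 * a ^ 3 * c ^ 3)
        + C (a ^ 2 * b ^ 2 * c ^ 2) + C (144 * a ^ 2 * b) * X ^ 2 + C (-4 * a ^ 2 * b ^ 3) * X
        + C (-6 * a ^ 2 * c ^ 2) * X + C (-80 * a * b ^ 2 * c) * X + C (18 * a * b * c ^ 3)
        + C (-192 * a * c) * X ^ 2 + C (16 * b ^ 4) * X + C (-4 * b ^ 3 * c ^ 2)
        + C (-128 * b ^ 2) * X ^ 2 + C (144 * b * c ^ 2) * X + C (-27 * c ^ 4) + C 256 * X ^ 3)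
      (derivative (C (-27 * a ^ 4) * X ^ 2 + C (18 * a ^ 3 * b * c) * X + C (-4 * a ^ 3 * c ^ 3)
        + C (a ^ 2 * b ^ 2 * c ^ 2) + C (144 * a ^ 2 * b) * X ^ 2 + C (-4 * a ^ 2 * b ^ 3) * X
        + C (-6 * a ^ 2 * c ^ 2) * X + C (-80 * a * b ^ 2 * c) * X + C (18 * a * b * c ^ 3)
        + C (-192 * a * c) * X ^ 2 + C (16 * b ^ 4) * X + C (-4 * b ^ 3 * c ^ 2)
        + C (-128 * b ^ 2) * X ^ 2 + C (144 * b * c ^ 2) * X + C (-27 * c ^ 4)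
        + C 256 * X ^ 3)) =
    4096 * (a ^ 3 - 4 * a * b + 8 * c) ^ 2
      * (27 * a ^ 3 * c - 9 * a ^ 2 * b ^ 2 - 108 * a * b * c + 32 * b ^ 3
          + 108 * c ^ 2) ^ 3 := by
  set f : Polynomial ℂ := C (-27 * a ^ 4) * X ^ 2 + C (18 * a ^ 3 * b * c) * X
      + C (-4 * a ^ 3 * c ^ 3) + C (a ^ 2 * b ^ 2 * c ^ 2) + C (144 * a ^ 2 * b) * X ^ 2
      + C (-4 * a ^ 2 * b ^ 3) * X + C (-6 * a ^ 2 * c ^ 2) * X + C (-80 * a * b ^ 2 * c) * X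
      + C (18 * a * b * c ^ 3) + C (-192 * a * c) * X ^ 2 + C (16 * b ^ 4) * X
      + C (-4 * b ^ 3 * c ^ 2) + C (-128 * b ^ 2) * X ^ 2 + C (144 * b * c ^ 2) * X
      + C (-27 * c ^ 4) + C 256 * X ^ 3 with hf
  have f3 : f.coeff 3 = 256 := by
    simp only [hf, coeff_add, coeff_C_mul, coeff_X_pow, coeff_C, coeff_X]; norm_num
  have f2 : f.coeff 2 = -27*a^4 + 144*a^2*b - 192*a*c - 128*b^2 := by
    simp only [hf, coeff_add, coeff_C_mul, coeff_X_pow, coeff_C, coeff_X]; norm_num; ring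
  have f1 : f.coeff 1 = 18*a^3*b*c - 4*a^2*b^3 - 6*a^2*c^2 - 80*a*b^2*c + 16*b^4 + 144*b*c^2 := by
    simp only [hf, coeff_add, coeff_C_mul, coeff_X_pow, coeff_C, coeff_X]; norm_num; ring
  have f0 : f.coeff 0 = -4*a^3*c^3 + a^2*b^2*c^2 + 18*a*b*c^3 - 4*b^3*c^2 - 27*c^4 := by
    simp only [hf, coeff_add, coeff_C_mul, coeff_X_pow, coeff_C, coeff_X]; norm_num; ring
  have g2 : (derivative f).coeff 2 = 768 := by
    rw [coeff_derivative, f3]; norm_num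
  have g1 : (derivative f).coeff 1 = 2 * (-27*a^4 + 144*a^2*b - 192*a*c - 128*b^2) := by
    rw [coeff_derivative, f2]; push_cast; ring
  have g0 : (derivative f).coeff 0
      = 18*a^3*b*c - 4*a^2*b^3 - 6*a^2*c^2 - 80*a*b^2*c + 16*b^4 + 144*b*c^2 := by
    rw [coeff_derivative, f1]; push_cast; ring
  unfold res
  rw [syl_eq, det5, f3, f2, f1, f0, g2, g1, g0]
  ring
end

section
/- For n ≥ 2 and 1 ≤ k ≤ n-2, let P = x^n + a_1 x^{n-1} + ⋯ + a_n, P_k := P - x·P'/(n-k), and V_k^n := Res(P_k, P_k', x). Then specializing a_{n+1} = 0 in the degree-(n+1) version gives V_k^{n+1}(a_1,…,a_n,0) = Ω · a_n^2 · V_k^n(a_1,…,a_n) for some nonzero rational constant Ω. -/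
open Polynomial Finset

/-- The general monic polynomial `P = x^n + a_1 x^(n-1) + ⋯ + a_n`. -/
noncomputable def Pgen (a : ℕ → ℂ) (n : ℕ) : Polynomial ℂ :=
  X ^ n + ∑ j ∈ Finset.Icc 1 n, C (a j) * X ^ (n - j)
/-- `P_k := P - x·P′/(n-k)`. -/
noncomputable def Pk (a : ℕ → ℂ) (n k : ℕ) : Polynomial ℂ :=
  Pgen a n - C (1 / ((n : ℂ) - (k : ℂ))) * (X * derivative (Pgen a n))

/-- `V_k^n := Res(P_k, P_k′, x)`. -/
noncomputable def Vk (a : ℕ → ℂ) (n k : ℕ) : ℂ :=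
  res n (n - 1) (Pk a n k) (derivative (Pk a n k))

namespace VkAux
variable {R : Type*} [CommRing R]


variable {R : Type*} [CommRing R]

/-- Adding multiples (coeff `c i`) of "early" rows (`σ i`, with `σ i < lo`) to all rows `i ≥ lo`
does not change the determinant. -/
def stepMat {N : ℕ} (A : Matrix (Fin N) (Fin N) R) (c : Fin N → R) (σ : Fin N → Fin N)
    (lo t : ℕ) : Matrix (Fin N) (Fin N) R :=
  Matrix.of fun i j => if lo ≤ (i : ℕ) ∧ (i : ℕ) < lo + t then A i j + c i * A (σ i) j else A i j

lemma det_stepMat {N : ℕ} (A : Matrix (Fin N) (Fin N) R) (c : Fin N → R) (σ : Fin N → Fin N)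
    (lo : ℕ) (hσ : ∀ i : Fin N, lo ≤ (i : ℕ) → ((σ i : Fin N) : ℕ) < lo) :
    ∀ t : ℕ, (stepMat A c σ lo t).det = A.det := by
  intro t
  induction t with
  | zero =>
      congr 1
      ext i j
      simp only [stepMat, Matrix.of_apply]
      rw [if_neg (by omega)]
  | succ t ih =>
      by_cases h : lo + t < N
      · have hlt := h
        let i₀ : Fin N := ⟨lo + t, h⟩
        have hv : (i₀ : ℕ) = lo + t := rfl
        have hσlt : ((σ i₀ : Fin N) : ℕ) < lo := hσ i₀ (by omega)
        have hne : i₀ ≠ σ i₀ := by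
          intro hcon
          rw [← hcon] at hσlt
          omega
        have key : stepMat A c σ lo (t + 1) =
            Matrix.updateRow (stepMat A c σ lo t) i₀
              ((stepMat A c σ lo t) i₀ + c i₀ • (stepMat A c σ lo t) (σ i₀)) := by
          ext i j
          by_cases hii : i = i₀
          · subst hii
            rw [Matrix.updateRow_self]
            simp only [stepMat, Matrix.of_apply, Pi.add_apply, Pi.smul_apply, smul_eq_mul]
            rw [if_pos (by omega), if_neg (by omega), if_neg (by omega)]
          · rw [Matrix.updateRow_ne hii]
            simp only [stepMat, Matrix.of_apply]
            have hvi : (i : ℕ) ≠ lo + t := by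
              intro hcon; exact hii (Fin.ext (by rw [hv, hcon]))
            by_cases hc : lo ≤ (i : ℕ) ∧ (i : ℕ) < lo + t
            · rw [if_pos (by omega), if_pos hc]
            · rw [if_neg (by omega), if_neg hc]
        rw [key, Matrix.det_updateRow_add_smul_self _ hne, ih]
      · have key : stepMat A c σ lo (t + 1) = stepMat A c σ lo t := by
          ext i j
          simp only [stepMat, Matrix.of_apply]
          have := i.isLt
          by_cases hc : lo ≤ (i : ℕ) ∧ (i : ℕ) < lo + t
          · rw [if_pos (by omega), if_pos hc]
          · rw [if_neg (by omega), if_neg hc]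
        rw [key, ih]

lemma det_rowops {N : ℕ} (A : Matrix (Fin N) (Fin N) R) (c : Fin N → R) (σ : Fin N → Fin N)
    (lo : ℕ) (hσ : ∀ i : Fin N, lo ≤ (i : ℕ) → ((σ i : Fin N) : ℕ) < lo) :
    (Matrix.of fun (i j : Fin N) => if lo ≤ (i : ℕ) then A i j + c i * A (σ i) j else A i j).det = A.det := by
  rw [← det_stepMat A c σ lo hσ N]
  congr 1
  ext i j
  simp only [stepMat, Matrix.of_apply]
  have := i.isLt
  by_cases hc : lo ≤ (i : ℕ)
  · rw [if_pos hc, if_pos (by omega)]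
  · rw [if_neg hc, if_neg (by omega)]

/-- Laplace expansion along a column with a single (potentially) nonzero entry. -/
lemma det_col_single {N : ℕ} (A : Matrix (Fin (N + 1)) (Fin (N + 1)) R) (r j : Fin (N + 1))
    (h : ∀ i, i ≠ r → A i j = 0) :
    A.det = (-1) ^ ((r : ℕ) + (j : ℕ)) * A r j * (A.submatrix r.succAbove j.succAbove).det := by
  rw [Matrix.det_succ_column A j, Finset.sum_eq_single r]
  · intro i _ hi
    rw [h i hi, mul_zero, zero_mul]
  · intro hr; exact absurd (Finset.mem_univ r) hr

lemma coe_succAbove {N : ℕ} (p : Fin (N + 1)) (i : Fin N) :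
    ((p.succAbove i : Fin (N + 1)) : ℕ) = if (i : ℕ) < (p : ℕ) then (i : ℕ) else (i : ℕ) + 1 := by
  rw [Fin.succAbove]
  split_ifs with h1 h2 h2
  · simp
  · exact absurd (by simpa [Fin.lt_def] using h1) h2
  · exact absurd (by simpa [Fin.lt_def] using h2) h1
  · simp

lemma coeff_add_X_deriv (Q : R[X]) (e : ℕ) :
    (Q + X * derivative Q).coeff e = ((e : R) + 1) * Q.coeff e := by
  cases e with
  | zero => simp [mul_comm]
  | succ e =>
      rw [coeff_add, coeff_X_mul, coeff_derivative]
      push_cast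
      ring

lemma coeff_deriv (Q : R[X]) (e : ℕ) :
    (derivative Q).coeff e = ((e : R) + 1) * Q.coeff (e + 1) := by
  rw [coeff_derivative]; push_cast; ring

lemma coeff_X_mul_zero' (Q : R[X]) : (X * Q).coeff 0 = 0 := by
  simp [coeff_mul]


variable {R : Type*} [CommRing R]

noncomputable def Grow (m : ℕ) (Q : R[X]) (i j : ℕ) : R :=
  if i ≤ m + 1 then
    (if i ≤ j ∧ j ≤ i + (m + 2) then Q.coeff (m + 2 - (j - i)) else 0)
  else if i = m + 2 then
    (if j ≤ m + 2 then (-(j : R)) * Q.coeff (m + 2 - j) else 0)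
  else if i ≤ 2 * m + 3 then
    (if i - (m + 2) ≤ j ∧ j ≤ (i - (m + 2)) + (m + 1) then
      (derivative Q).coeff (m + 1 - (j - (i - (m + 2)))) else 0)
  else
    (if m + 2 ≤ j ∧ j ≤ 2 * m + 4 then
      ((m + 3 - (j - (m + 2)) : ℕ) : R) * Q.coeff (m + 2 - (j - (m + 2))) else 0)

noncomputable def Gprow (m : ℕ) (Q : R[X]) (i j : ℕ) : R :=
  if i ≤ m then
    (if i ≤ j ∧ j ≤ i + (m + 2) then Q.coeff (m + 2 - (j - i)) else 0)
  else if i = m + 1 then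
    (if j ≤ m + 2 then (-(j : R)) * Q.coeff (m + 2 - j) else 0)
  else
    (if i - (m + 1) ≤ j ∧ j ≤ (i - (m + 1)) + (m + 1) then
      (derivative Q).coeff (m + 1 - (j - (i - (m + 1)))) else 0)

lemma Grow_eq_Gprow (m : ℕ) (Q : R[X]) (u v : ℕ) (hu : u ≤ 2 * m + 1) :
    Grow m Q (if u < m then u + 1 else u + 2) (v + 1) = Gprow m Q (u + 1) (v + 1) := by
  rcases lt_trichotomy u m with h | h | h
  · rw [if_pos h]
    unfold Grow Gprow
    rw [if_pos (show u + 1 ≤ m + 1 by omega), if_pos (show u + 1 ≤ m by omega)]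
  · subst h
    rw [if_neg (lt_irrefl _)]
    unfold Grow Gprow
    rw [if_neg (show ¬ (u + 2 ≤ u + 1) by omega), if_pos (show u + 2 = u + 2 from rfl),
      if_neg (show ¬ (u + 1 ≤ u) by omega), if_pos (show u + 1 = u + 1 from rfl)]
  · rw [if_neg (show ¬ u < m by omega)]
    unfold Grow Gprow
    rw [if_neg (show ¬ (u + 2 ≤ m + 1) by omega), if_neg (show ¬ (u + 2 = m + 2) by omega),
      if_pos (show u + 2 ≤ 2 * m + 3 by omega), if_neg (show ¬ (u + 1 ≤ m) by omega),
      if_neg (show ¬ (u + 1 = m + 1) by omega),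
      show u + 2 - (m + 2) = u + 1 - (m + 1) from by omega]

lemma S_f (m : ℕ) (Q : R[X]) (i j : Fin (m + 3 + (m + 2))) (hi : (i : ℕ) < m + 2) :
    sylvester (m + 3) (m + 2) (X * Q) (Q + X * derivative Q) i j
      = if (i : ℕ) ≤ (j : ℕ) ∧ (j : ℕ) ≤ (i : ℕ) + (m + 2) then
          Q.coeff (m + 2 - ((j : ℕ) - (i : ℕ))) else 0 := by
  show (if (i : ℕ) < m + 2 then _ else _) = _
  rw [if_pos hi]
  by_cases h : (i : ℕ) ≤ (j : ℕ) ∧ (j : ℕ) ≤ (i : ℕ) + (m + 2)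
  · rw [if_pos ⟨h.1, by omega⟩, if_pos h]
    have he : m + 3 - ((j : ℕ) - (i : ℕ)) = (m + 2 - ((j : ℕ) - (i : ℕ))) + 1 := by omega
    rw [he, coeff_X_mul]
  · rw [if_neg h]
    by_cases h2 : (i : ℕ) ≤ (j : ℕ) ∧ (j : ℕ) ≤ (i : ℕ) + (m + 3)
    · rw [if_pos h2]
      have he : m + 3 - ((j : ℕ) - (i : ℕ)) = 0 := by omega
      rw [he, coeff_X_mul_zero']
    · rw [if_neg h2]

lemma S_g (m : ℕ) (Q : R[X]) (i j : Fin (m + 3 + (m + 2))) (hi : m + 2 ≤ (i : ℕ)) :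
    sylvester (m + 3) (m + 2) (X * Q) (Q + X * derivative Q) i j
      = if (i : ℕ) - (m + 2) ≤ (j : ℕ) ∧ (j : ℕ) ≤ ((i : ℕ) - (m + 2)) + (m + 2) then
          ((m + 3 - ((j : ℕ) - ((i : ℕ) - (m + 2))) : ℕ) : R)
            * Q.coeff (m + 2 - ((j : ℕ) - ((i : ℕ) - (m + 2)))) else 0 := by
  show (if (i : ℕ) < m + 2 then _ else _) = _
  rw [if_neg (by omega)]
  by_cases h : (i : ℕ) - (m + 2) ≤ (j : ℕ) ∧ (j : ℕ) ≤ ((i : ℕ) - (m + 2)) + (m + 2)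
  · rw [if_pos h, if_pos h, coeff_add_X_deriv]
    have he : (m + 3 - ((j : ℕ) - ((i : ℕ) - (m + 2))) : ℕ)
        = (m + 2 - ((j : ℕ) - ((i : ℕ) - (m + 2)))) + 1 := by omega
    rw [he]
    push_cast
    ring
  · rw [if_neg h, if_neg h]

lemma T_f (m : ℕ) (Q : R[X]) (i j : Fin (m + 2 + (m + 1))) (hi : (i : ℕ) < m + 1) :
    sylvester (m + 2) (m + 1) Q (derivative Q) i j
      = if (i : ℕ) ≤ (j : ℕ) ∧ (j : ℕ) ≤ (i : ℕ) + (m + 2) then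
          Q.coeff (m + 2 - ((j : ℕ) - (i : ℕ))) else 0 := by
  show (if (i : ℕ) < m + 1 then _ else _) = _
  rw [if_pos hi]

lemma T_g (m : ℕ) (Q : R[X]) (i j : Fin (m + 2 + (m + 1))) (hi : m + 1 ≤ (i : ℕ)) :
    sylvester (m + 2) (m + 1) Q (derivative Q) i j
      = if (i : ℕ) - (m + 1) ≤ (j : ℕ) ∧ (j : ℕ) ≤ ((i : ℕ) - (m + 1)) + (m + 1) then
          (derivative Q).coeff (m + 1 - ((j : ℕ) - ((i : ℕ) - (m + 1)))) else 0 := by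
  show (if (i : ℕ) < m + 1 then _ else _) = _
  rw [if_neg (by omega)]

theorem detS_eq_detG (m : ℕ) (Q : R[X]) :
    (_root_.sylvester (m + 3) (m + 2) (X * Q) (Q + X * derivative Q)).det
      = (Matrix.of fun (i j : Fin (m + 3 + (m + 2))) => Grow m Q (i : ℕ) (j : ℕ)).det := by
  have hrw := det_rowops (_root_.sylvester (m + 3) (m + 2) (X * Q) (Q + X * derivative Q))
      (fun i => if (i : ℕ) = m + 2 then -((m + 3 : ℕ) : R)
        else if (i : ℕ) ≤ 2 * m + 3 then -1 else 0)
      (fun i => if h : (i : ℕ) ≤ 2 * m + 3 ∧ m + 2 ≤ (i : ℕ)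
        then ⟨(i : ℕ) - (m + 2), by omega⟩ else ⟨0, by omega⟩)
      (m + 2)
      (by
        intro i hi
        by_cases h : (i : ℕ) ≤ 2 * m + 3 ∧ m + 2 ≤ (i : ℕ)
        · rw [dif_pos h]; show (i : ℕ) - (m + 2) < m + 2; omega
        · rw [dif_neg h]; show 0 < m + 2; omega)
  rw [← hrw]
  congr 1
  ext i j
  simp only [Matrix.of_apply]
  by_cases h1 : (i : ℕ) ≤ m + 1
  · rw [if_neg (show ¬ (m + 2 ≤ (i : ℕ)) from by omega), S_f m Q i j (by omega)]
    unfold Grow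
    rw [if_pos h1]
  · have h1' : m + 2 ≤ (i : ℕ) := by omega
    have hlt := i.isLt
    rw [if_pos h1']
    by_cases h2 : (i : ℕ) = m + 2
    · rw [if_pos h2, dif_pos (show (i : ℕ) ≤ 2 * m + 3 ∧ m + 2 ≤ (i : ℕ) by omega),
        S_g m Q i j h1',
        S_f m Q ⟨(i : ℕ) - (m + 2), by omega⟩ j (by show (i : ℕ) - (m + 2) < m + 2; omega)]
      simp only [Fin.val_mk]
      rw [show (i : ℕ) - (m + 2) = 0 from by omega]
      unfold Grow
      rw [if_neg (show ¬ ((i : ℕ) ≤ m + 1) from by omega), if_pos h2]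
      by_cases hj : (j : ℕ) ≤ m + 2
      · rw [if_pos (show (0:ℕ) ≤ (j:ℕ) ∧ (j:ℕ) ≤ 0 + (m+2) by omega),
          if_pos (show (0:ℕ) ≤ (j:ℕ) ∧ (j:ℕ) ≤ 0 + (m+2) by omega), if_pos hj,
          Nat.sub_zero, Nat.cast_sub (show (j:ℕ) ≤ m + 3 by omega)]
        push_cast
        ring
      · rw [if_neg (show ¬ ((0:ℕ) ≤ (j:ℕ) ∧ (j:ℕ) ≤ 0 + (m+2)) from by omega),
          if_neg (show ¬ ((0:ℕ) ≤ (j:ℕ) ∧ (j:ℕ) ≤ 0 + (m+2)) from by omega), if_neg hj]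
        ring
    · by_cases h3 : (i : ℕ) ≤ 2 * m + 3
      · rw [if_neg h2, if_pos h3,
          dif_pos (show (i : ℕ) ≤ 2 * m + 3 ∧ m + 2 ≤ (i : ℕ) by omega),
          S_g m Q i j h1',
          S_f m Q ⟨(i : ℕ) - (m + 2), by omega⟩ j (by show (i : ℕ) - (m + 2) < m + 2; omega)]
        simp only [Fin.val_mk]
        unfold Grow
        rw [if_neg (show ¬ ((i : ℕ) ≤ m + 1) from by omega), if_neg h2, if_pos h3]
        by_cases hj : (i:ℕ) - (m+2) ≤ (j:ℕ) ∧ (j:ℕ) ≤ ((i:ℕ) - (m+2)) + (m+2)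
        · rw [if_pos hj, if_pos hj]
          by_cases hj2 : (j : ℕ) ≤ ((i:ℕ) - (m+2)) + (m + 1)
          · rw [if_pos (show (i:ℕ) - (m+2) ≤ (j:ℕ) ∧ (j:ℕ) ≤ ((i:ℕ) - (m+2)) + (m+1)
                from ⟨hj.1, hj2⟩), coeff_deriv,
              show (m + 1 - ((j:ℕ) - ((i:ℕ) - (m+2)))) + 1 = m + 2 - ((j:ℕ) - ((i:ℕ) - (m+2)))
                from by omega,
              Nat.cast_sub (show (j:ℕ) - ((i:ℕ) - (m+2)) ≤ m + 3 by omega),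
              Nat.cast_sub (show (j:ℕ) - ((i:ℕ) - (m+2)) ≤ m + 1 by omega)]
            push_cast
            ring
          · rw [if_neg (show ¬ ((i:ℕ) - (m+2) ≤ (j:ℕ) ∧ (j:ℕ) ≤ ((i:ℕ) - (m+2)) + (m+1))
                from by omega),
              show (j:ℕ) - ((i:ℕ) - (m+2)) = m + 2 from by omega,
              show m + 3 - (m + 2) = 1 from by omega]
            push_cast
            ring
        · rw [if_neg hj, if_neg hj,
            if_neg (show ¬ ((i:ℕ) - (m+2) ≤ (j:ℕ) ∧ (j:ℕ) ≤ ((i:ℕ) - (m+2)) + (m+1))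
              from by omega)]
          ring
      · rw [if_neg h2, if_neg h3, zero_mul, add_zero, S_g m Q i j h1']
        unfold Grow
        rw [if_neg (show ¬ ((i : ℕ) ≤ m + 1) from by omega), if_neg h2, if_neg h3,
          show (i : ℕ) = 2 * m + 4 from by omega,
          show 2 * m + 4 - (m + 2) = m + 2 from by omega,
          show (m + 2) + (m + 2) = 2 * m + 4 from by omega]

theorem detT_eq_detGp (m : ℕ) (Q : R[X]) :
    (sylvester (m + 2) (m + 1) Q (derivative Q)).det
      = (Matrix.of fun (i j : Fin (m + 2 + (m + 1))) => Gprow m Q (i : ℕ) (j : ℕ)).det := by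
  have hrw := det_rowops (sylvester (m + 2) (m + 1) Q (derivative Q))
      (fun i => if (i : ℕ) = m + 1 then -((m + 2 : ℕ) : R) else 0)
      (fun _ => ⟨0, by omega⟩)
      (m + 1)
      (by intro i hi; show (0 : ℕ) < m + 1; omega)
  rw [← hrw]
  congr 1
  ext i j
  simp only [Matrix.of_apply]
  by_cases h1 : (i : ℕ) ≤ m
  · rw [if_neg (show ¬ (m + 1 ≤ (i : ℕ)) from by omega), T_f m Q i j (by omega)]
    unfold Gprow
    rw [if_pos h1]
  · have h1' : m + 1 ≤ (i : ℕ) := by omega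
    have hlt := i.isLt
    rw [if_pos h1']
    by_cases h2 : (i : ℕ) = m + 1
    · rw [if_pos h2, T_g m Q i j h1', T_f m Q ⟨0, by omega⟩ j (by show (0:ℕ) < m + 1; omega)]
      simp only [Fin.val_mk]
      rw [show (i : ℕ) - (m + 1) = 0 from by omega]
      unfold Gprow
      rw [if_neg (show ¬ ((i : ℕ) ≤ m) from by omega), if_pos h2, Nat.sub_zero]
      by_cases hj : (j : ℕ) ≤ m + 1
      · rw [if_pos (show (0:ℕ) ≤ (j:ℕ) ∧ (j:ℕ) ≤ 0 + (m + 1) by omega),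
          if_pos (show (0:ℕ) ≤ (j:ℕ) ∧ (j:ℕ) ≤ 0 + (m + 2) by omega),
          if_pos (show (j:ℕ) ≤ m + 2 by omega), coeff_deriv,
          show (m + 1 - (j:ℕ)) + 1 = m + 2 - (j:ℕ) from by omega,
          Nat.cast_sub (show (j:ℕ) ≤ m + 1 by omega)]
        push_cast
        ring
      · by_cases hj2 : (j : ℕ) ≤ m + 2
        · rw [if_neg (show ¬ ((0:ℕ) ≤ (j:ℕ) ∧ (j:ℕ) ≤ 0 + (m + 1)) from by omega),
            if_pos (show (0:ℕ) ≤ (j:ℕ) ∧ (j:ℕ) ≤ 0 + (m + 2) by omega), if_pos hj2,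
            show (j : ℕ) = m + 2 from by omega]
          push_cast
          ring
        · rw [if_neg (show ¬ ((0:ℕ) ≤ (j:ℕ) ∧ (j:ℕ) ≤ 0 + (m + 1)) from by omega),
            if_neg (show ¬ ((0:ℕ) ≤ (j:ℕ) ∧ (j:ℕ) ≤ 0 + (m + 2)) from by omega), if_neg hj2]
          ring
    · rw [if_neg h2, zero_mul, add_zero, T_g m Q i j h1']
      unfold Gprow
      rw [if_neg (show ¬ ((i : ℕ) ≤ m) from by omega), if_neg h2]

/-- Determinants of matrices defined by an entry function depend only on the size. -/
lemma det_of_cast {a b : ℕ} (h : a = b) (f : ℕ → ℕ → R) :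
    (Matrix.of fun (i j : Fin b) => f (i : ℕ) (j : ℕ)).det
      = (Matrix.of fun (i j : Fin a) => f (i : ℕ) (j : ℕ)).det := by
  subst h; rfl

/-- Laplace expansion for an entry-function matrix along a column with a single
nonzero entry, in purely ℕ-indexed form. -/
lemma det_expand (M : ℕ) (f : ℕ → ℕ → R) (r c : ℕ) (hr : r < M + 1) (hc : c < M + 1)
    (h0 : ∀ i, i < M + 1 → i ≠ r → f i c = 0) :
    (Matrix.of fun (i j : Fin (M + 1)) => f (i : ℕ) (j : ℕ)).det
      = (-1) ^ (r + c) * f r c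
        * (Matrix.of fun (i j : Fin M) =>
            f (if (i : ℕ) < r then (i : ℕ) else (i : ℕ) + 1)
              (if (j : ℕ) < c then (j : ℕ) else (j : ℕ) + 1)).det := by
  have hz : ∀ i : Fin (M + 1), i ≠ ⟨r, hr⟩ →
      (Matrix.of fun (i j : Fin (M + 1)) => f (i : ℕ) (j : ℕ)) i ⟨c, hc⟩ = 0 := by
    intro i hne
    exact h0 (i : ℕ) i.isLt (fun hval => hne (Fin.ext (by rw [hval, Fin.val_mk])))
  rw [det_col_single _ ⟨r, hr⟩ ⟨c, hc⟩ hz]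
  simp only [Fin.val_mk, Matrix.of_apply]
  have hsub : (Matrix.of fun (i j : Fin (M + 1)) => f (i : ℕ) (j : ℕ)).submatrix
        (⟨r, hr⟩ : Fin (M + 1)).succAbove (⟨c, hc⟩ : Fin (M + 1)).succAbove
      = Matrix.of fun (i j : Fin M) =>
          f (if (i : ℕ) < r then (i : ℕ) else (i : ℕ) + 1)
            (if (j : ℕ) < c then (j : ℕ) else (j : ℕ) + 1) := by
    ext u v
    simp only [Matrix.submatrix_apply, Matrix.of_apply, coe_succAbove, Fin.val_mk]
  rw [hsub]

lemma Grow_last_col (m : ℕ) (Q : R[X]) :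
    ∀ i, i < 2 * m + 4 + 1 → i ≠ 2 * m + 4 → Grow m Q i (2 * m + 4) = 0 := by
  intro i hi hne
  unfold Grow
  split_ifs <;> first | rfl | (exfalso; omega)

lemma Grow_corner (m : ℕ) (Q : R[X]) : Grow m Q (2 * m + 4) (2 * m + 4) = Q.coeff 0 := by
  unfold Grow
  rw [if_neg (by omega), if_neg (by omega), if_neg (by omega),
    if_pos (show m + 2 ≤ 2 * m + 4 ∧ 2 * m + 4 ≤ 2 * m + 4 by omega),
    show 2 * m + 4 - (m + 2) = m + 2 from by omega,
    show m + 3 - (m + 2) = 1 from by omega,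
    show m + 2 - (m + 2) = 0 from by omega]
  push_cast
  ring

lemma Grow_col0 (m : ℕ) (Q : R[X]) :
    ∀ i, i < 2 * m + 3 + 1 → i ≠ 0 → Grow m Q i 0 = 0 := by
  intro i hi hne
  unfold Grow
  split_ifs <;> first | rfl | (exfalso; omega) | simp

lemma Grow_00 (m : ℕ) (Q : R[X]) : Grow m Q 0 0 = Q.coeff (m + 2) := by
  unfold Grow
  rw [if_pos (show (0:ℕ) ≤ m + 1 by omega),
    if_pos (show (0:ℕ) ≤ 0 ∧ (0:ℕ) ≤ 0 + (m + 2) by omega)]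
  norm_num

lemma Grow_shift_last_col (m : ℕ) (Q : R[X]) :
    ∀ i, i < 2 * m + 2 + 1 → i ≠ m → Grow m Q (i + 1) (2 * m + 2 + 1) = 0 := by
  intro i hi hne
  unfold Grow
  split_ifs <;> first | rfl | (exfalso; omega)

lemma Grow_mid (m : ℕ) (Q : R[X]) : Grow m Q (m + 1) (2 * m + 2 + 1) = Q.coeff 0 := by
  unfold Grow
  rw [if_pos (show m + 1 ≤ m + 1 from le_refl _),
    if_pos (show m + 1 ≤ 2 * m + 2 + 1 ∧ 2 * m + 2 + 1 ≤ m + 1 + (m + 2) by omega),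
    show m + 2 - (2 * m + 2 + 1 - (m + 1)) = 0 from by omega]

lemma Gprow_col0 (m : ℕ) (Q : R[X]) :
    ∀ i, i < 2 * m + 2 + 1 → i ≠ 0 → Gprow m Q i 0 = 0 := by
  intro i hi hne
  unfold Gprow
  split_ifs <;> first | rfl | (exfalso; omega) | simp

lemma Gprow_00 (m : ℕ) (Q : R[X]) : Gprow m Q 0 0 = Q.coeff (m + 2) := by
  unfold Gprow
  rw [if_pos (Nat.zero_le m),
    if_pos (show (0:ℕ) ≤ 0 ∧ (0:ℕ) ≤ 0 + (m + 2) by omega)]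
  norm_num

theorem core (m : ℕ) (Q : R[X]) :
    (_root_.sylvester (m + 3) (m + 2) (X * Q) (Q + X * derivative Q)).det
      = (-1 : R) ^ m * Q.coeff 0 ^ 2 * (sylvester (m + 2) (m + 1) Q (derivative Q)).det := by
  rw [detS_eq_detG, detT_eq_detGp]
  rw [det_of_cast (a := 2 * m + 4 + 1) (b := m + 3 + (m + 2)) (by omega) (Grow m Q),
    det_expand (2 * m + 4) (Grow m Q) (2 * m + 4) (2 * m + 4) (by omega) (by omega)
      (Grow_last_col m Q)]
  have hA : (Matrix.of fun (i j : Fin (2 * m + 4)) =>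
        Grow m Q (if (i : ℕ) < 2 * m + 4 then (i : ℕ) else (i : ℕ) + 1)
          (if (j : ℕ) < 2 * m + 4 then (j : ℕ) else (j : ℕ) + 1))
      = Matrix.of fun (i j : Fin (2 * m + 4)) => Grow m Q (i : ℕ) (j : ℕ) := by
    ext u v
    simp only [Matrix.of_apply]
    rw [if_pos u.isLt, if_pos v.isLt]
  rw [hA, det_of_cast (a := 2 * m + 3 + 1) (b := 2 * m + 4) (by omega) (Grow m Q),
    det_expand (2 * m + 3) (Grow m Q) 0 0 (by omega) (by omega) (Grow_col0 m Q)]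
  have hB : (Matrix.of fun (i j : Fin (2 * m + 3)) =>
        Grow m Q (if (i : ℕ) < 0 then (i : ℕ) else (i : ℕ) + 1)
          (if (j : ℕ) < 0 then (j : ℕ) else (j : ℕ) + 1))
      = Matrix.of fun (i j : Fin (2 * m + 3)) => Grow m Q ((i : ℕ) + 1) ((j : ℕ) + 1) := by
    ext u v
    simp only [Matrix.of_apply]
    rw [if_neg (Nat.not_lt_zero _), if_neg (Nat.not_lt_zero _)]
  rw [hB, det_of_cast (a := 2 * m + 2 + 1) (b := 2 * m + 3) (by omega)
      (fun a b => Grow m Q (a + 1) (b + 1)),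
    det_expand (2 * m + 2) (fun a b => Grow m Q (a + 1) (b + 1)) m (2 * m + 2)
      (by omega) (by omega) (Grow_shift_last_col m Q)]
  have hD : (Matrix.of fun (i j : Fin (2 * m + 2)) =>
        Grow m Q ((if (i : ℕ) < m then (i : ℕ) else (i : ℕ) + 1) + 1)
          ((if (j : ℕ) < 2 * m + 2 then (j : ℕ) else (j : ℕ) + 1) + 1))
      = Matrix.of fun (i j : Fin (2 * m + 2)) => Gprow m Q ((i : ℕ) + 1) ((j : ℕ) + 1) := by
    ext u v
    simp only [Matrix.of_apply]
    rw [if_pos v.isLt]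
    have := Grow_eq_Gprow m Q (u : ℕ) (v : ℕ) (by omega)
    by_cases hu : (u : ℕ) < m
    · rw [if_pos hu]
      rw [if_pos hu] at this
      exact this
    · rw [if_neg hu]
      rw [if_neg hu] at this
      exact this
  rw [show (Matrix.of fun (i j : Fin (2 * m + 2)) =>
        (fun a b => Grow m Q (a + 1) (b + 1))
          (if (i : ℕ) < m then (i : ℕ) else (i : ℕ) + 1)
          (if (j : ℕ) < 2 * m + 2 then (j : ℕ) else (j : ℕ) + 1))
      = Matrix.of fun (i j : Fin (2 * m + 2)) => Gprow m Q ((i : ℕ) + 1) ((j : ℕ) + 1) from hD]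
  -- T side
  rw [det_of_cast (a := 2 * m + 2 + 1) (b := m + 2 + (m + 1)) (by omega) (Gprow m Q),
    det_expand (2 * m + 2) (Gprow m Q) 0 0 (by omega) (by omega) (Gprow_col0 m Q)]
  have hC : (Matrix.of fun (i j : Fin (2 * m + 2)) =>
        Gprow m Q (if (i : ℕ) < 0 then (i : ℕ) else (i : ℕ) + 1)
          (if (j : ℕ) < 0 then (j : ℕ) else (j : ℕ) + 1))
      = Matrix.of fun (i j : Fin (2 * m + 2)) => Gprow m Q ((i : ℕ) + 1) ((j : ℕ) + 1) := by
    ext u v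
    simp only [Matrix.of_apply]
    rw [if_neg (Nat.not_lt_zero _), if_neg (Nat.not_lt_zero _)]
  rw [hC, Grow_corner, Grow_00, Gprow_00]
  rw [Grow_mid m Q]
  have hs1 : (-1 : R) ^ (2 * m + 4 + (2 * m + 4)) = 1 :=
    Even.neg_one_pow ⟨2 * m + 4, by ring⟩
  have hs3 : (-1 : R) ^ (m + (2 * m + 2)) = (-1 : R) ^ m := by
    rw [show m + (2 * m + 2) = m + 2 * (m + 1) from by ring, pow_add, pow_mul, neg_one_sq,
      one_pow, mul_one]
  rw [hs1, hs3]
  ring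

end VkAux

open VkAux

theorem Vk_specialize_top_coeff_zero (n k : ℕ) (hn : 2 ≤ n) (hk1 : 1 ≤ k) (hk2 : k ≤ n - 2) :
    ∃ Ω : ℚ, Ω ≠ 0 ∧ ∀ a : ℕ → ℂ, a (n + 1) = 0 →
      Vk a (n + 1) k = (Ω : ℂ) * (a n) ^ 2 * Vk a n k := by
  obtain ⟨m, rfl⟩ : ∃ m, n = m + 2 := ⟨n - 2, by omega⟩
  have hk : k ≤ m := by omega
  refine ⟨(-1) ^ m * (((m : ℚ) + 2 - k) / ((m : ℚ) + 3 - k)) ^ (2 * m + 5), ?_, ?_⟩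
  · have hnum : ((m : ℚ) + 2 - (k : ℚ)) ≠ 0 := by
      have h1 : ((m : ℚ) + 2) = ((m + 2 : ℕ) : ℚ) := by push_cast; ring
      rw [h1, sub_ne_zero]
      exact_mod_cast (show (m + 2 : ℕ) ≠ k by omega)
    have hden : ((m : ℚ) + 3 - (k : ℚ)) ≠ 0 := by
      have h1 : ((m : ℚ) + 3) = ((m + 3 : ℕ) : ℚ) := by push_cast; ring
      rw [h1, sub_ne_zero]
      exact_mod_cast (show (m + 3 : ℕ) ≠ k by omega)
    exact mul_ne_zero (pow_ne_zero _ (by norm_num)) (pow_ne_zero _ (div_ne_zero hnum hden))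
  · intro a ha
    have hA : ((m : ℂ) + 3 - (k : ℂ)) ≠ 0 := by
      have h1 : ((m : ℂ) + 3) = ((m + 3 : ℕ) : ℂ) := by push_cast; ring
      rw [h1, sub_ne_zero]
      exact_mod_cast (show (m + 3 : ℕ) ≠ k by omega)
    have hB : ((m : ℂ) + 2 - (k : ℂ)) ≠ 0 := by
      have h1 : ((m : ℂ) + 2) = ((m + 2 : ℕ) : ℂ) := by push_cast; ring
      rw [h1, sub_ne_zero]
      exact_mod_cast (show (m + 2 : ℕ) ≠ k by omega)
    have hp : Pgen a (m + 2 + 1) = X * Pgen a (m + 2) := by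
      unfold Pgen
      rw [Finset.sum_Icc_succ_top (show 1 ≤ m + 2 + 1 by omega), ha, map_zero, zero_mul,
        add_zero, mul_add]
      congr 1
      · rw [← pow_succ']
      · rw [Finset.mul_sum]
        refine Finset.sum_congr rfl (fun j hj => ?_)
        have hj' := Finset.mem_Icc.mp hj
        rw [show m + 2 + 1 - j = (m + 2 - j) + 1 from by omega, pow_succ']
        ring
    have e1 : (1 : ℂ[X]) - C (1 / (((m + 2 + 1 : ℕ) : ℂ) - (k : ℂ)))
        = C (((m : ℂ) + 2 - k) / ((m : ℂ) + 3 - k)) := by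
      rw [← C_1, ← C_sub]
      congr 1
      push_cast
      rw [show ((m : ℂ) + 2 + 1) = (m : ℂ) + 3 from by ring]
      field_simp
      ring
    have e2 : C ((1 : ℂ) / (((m + 2 + 1 : ℕ) : ℂ) - (k : ℂ)))
        = C (((m : ℂ) + 2 - k) / ((m : ℂ) + 3 - k))
          * C ((1 : ℂ) / (((m + 2 : ℕ) : ℂ) - (k : ℂ))) := by
      rw [← C_mul]
      congr 1
      push_cast
      rw [show ((m : ℂ) + 2 + 1) = (m : ℂ) + 3 from by ring]
      field_simp
    have hpk : Pk a (m + 2 + 1) k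
        = C (((m : ℂ) + 2 - k) / ((m : ℂ) + 3 - k)) * (X * Pk a (m + 2) k) := by
      unfold Pk
      rw [hp, derivative_mul, derivative_X, one_mul]
      linear_combination (X * Pgen a (m + 2)) * e1
        - (X * X * derivative (Pgen a (m + 2))) * e2
    have hq0 : (Pk a (m + 2) k).coeff 0 = a (m + 2) := by
      unfold Pk Pgen
      rw [coeff_sub, coeff_C_mul, coeff_X_mul_zero', mul_zero, sub_zero, coeff_add,
        coeff_X_pow, if_neg (by omega), zero_add, finset_sum_coeff,
        Finset.sum_eq_single (m + 2)]
      · rw [coeff_C_mul, show m + 2 - (m + 2) = 0 from by omega, pow_zero, coeff_one_zero,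
          mul_one]
      · intro j hj hne
        have := Finset.mem_Icc.mp hj
        rw [coeff_C_mul, coeff_X_pow, if_neg (by omega), mul_zero]
      · intro h
        exact absurd (Finset.mem_Icc.mpr ⟨by omega, le_refl _⟩) h
    unfold Vk res
    rw [show m + 2 + 1 - 1 = m + 2 from rfl, show m + 2 - 1 = m + 1 from rfl,
      show m + 2 + 1 = m + 3 from rfl] at *
    rw [hpk, derivative_C_mul, derivative_mul, derivative_X, one_mul]
    have hscale : _root_.sylvester (m + 3) (m + 2)
          (C (((m : ℂ) + 2 - k) / ((m : ℂ) + 3 - k)) * (X * Pk a (m + 2) k))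
          (C (((m : ℂ) + 2 - k) / ((m : ℂ) + 3 - k))
            * (Pk a (m + 2) k + X * derivative (Pk a (m + 2) k)))
        = (((m : ℂ) + 2 - k) / ((m : ℂ) + 3 - k))
          • _root_.sylvester (m + 3) (m + 2) (X * Pk a (m + 2) k)
              (Pk a (m + 2) k + X * derivative (Pk a (m + 2) k)) := by
      ext i j
      simp only [_root_.sylvester, Matrix.smul_apply, smul_eq_mul]
      split_ifs <;> simp [coeff_C_mul]
    rw [hscale, Matrix.det_smul, core m (Pk a (m + 2) k), hq0, Fintype.card_fin]
    push_cast
    rw [show m + 3 + (m + 2) = 2 * m + 5 from by omega]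
    ring
end
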